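/- If (B,i,j) is a stable ADHM datum with μ(B,i,j) = 0, then the differential of the moment map μ at (B,i,j), namely the ℂ-linear map dμ : M → ⊕_{k∈I} End(V_k) given by dμ(δB,δi,δj) = (Σ_{h∈H : in(h)=k} ε(h)(δB_h∘B_h̄ + B_h∘δB_h̄) + δi_k∘j_k + i_k∘δj_k)_{k∈I}, is surjective. -/

import Mathlib

noncomputable section

/-- The data of a finite graph without edge loops, presented by its set `H` of oriented
edges over the vertex set `I`: source and target maps `src`, `tgt`, and a fixed-point-free
orientation-reversing involution `bar`. -/
structure GraphData (I H : Type) where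
  src : H → I
  tgt : H → I
  bar : H → H
  bar_invol : ∀ h, bar (bar h) = h
  bar_ne_self : ∀ h, bar h ≠ h
  src_bar : ∀ h, src (bar h) = tgt h
  tgt_bar : ∀ h, tgt (bar h) = src h
  no_loops : ∀ h, src h ≠ tgt h

/-- Transport of the fibres of a family of normed spaces along an equality of indices. -/
def vCast {I : Type} (V : I → Type)
    [∀ k, NormedAddCommGroup (V k)] [∀ k, NormedSpace ℂ (V k)]
    {k l : I} (e : k = l) : V k ≃L[ℂ] V l := by
  subst e
  exact ContinuousLinearEquiv.refl ℂ (V k)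

/-- Stability of an ADHM datum `(B, i, j)`: the only family of subspaces `S k ⊆ V k`
which is `B`-invariant and contained in `ker (j k)` is the zero family. -/
def IsStable {I H : Type} (G : GraphData I H) (V W : I → Type)
    [∀ k, NormedAddCommGroup (V k)] [∀ k, NormedSpace ℂ (V k)]
    [∀ k, NormedAddCommGroup (W k)] [∀ k, NormedSpace ℂ (W k)]
    (B : ∀ h : H, V (G.src h) →L[ℂ] V (G.tgt h))
    (j : ∀ k : I, V k →L[ℂ] W k) : Prop :=
  ∀ S : ∀ k : I, Submodule ℂ (V k),
    (∀ h : H, ∀ x ∈ S (G.src h), B h x ∈ S (G.tgt h)) →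
    (∀ k : I, ∀ x ∈ S k, j k x = 0) →
    ∀ k : I, S k = ⊥

/-- For an oriented edge `h`, the composite `A ∘ A'` of a map `A` along `h` and a map `A'`
along `bar h`, as an endomorphism of `V (tgt h)`. -/
def barComp {I H : Type} (G : GraphData I H) (V : I → Type)
    [∀ k, NormedAddCommGroup (V k)] [∀ k, NormedSpace ℂ (V k)] (h : H)
    (A : V (G.src h) →L[ℂ] V (G.tgt h))
    (A' : V (G.src (G.bar h)) →L[ℂ] V (G.tgt (G.bar h))) :
    V (G.tgt h) →L[ℂ] V (G.tgt h) :=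
  A.comp ((vCast V (G.tgt_bar h) : V (G.tgt (G.bar h)) →L[ℂ] V (G.src h)).comp
    (A'.comp ((vCast V (G.src_bar h)).symm : V (G.tgt h) →L[ℂ] V (G.src (G.bar h)))))

/-- The `k`-th component of the moment map `μ(B, i, j) = ε B B + i j`. -/
def momentMap {I H : Type} [Fintype H] [DecidableEq I] (G : GraphData I H)
    (V W : I → Type)
    [∀ k, NormedAddCommGroup (V k)] [∀ k, NormedSpace ℂ (V k)]
    [∀ k, NormedAddCommGroup (W k)] [∀ k, NormedSpace ℂ (W k)]
    (ε : H → ℂ)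
    (B : ∀ h : H, V (G.src h) →L[ℂ] V (G.tgt h))
    (i : ∀ k : I, W k →L[ℂ] V k) (j : ∀ k : I, V k →L[ℂ] W k) (k : I) :
    V k →L[ℂ] V k :=
  (∑ h : H, if e : G.tgt h = k then
      ((vCast V e : V (G.tgt h) →L[ℂ] V k).comp
        ((ε h • barComp G V h (B h) (B (G.bar h))).comp
          ((vCast V e).symm : V k →L[ℂ] V (G.tgt h))))
    else 0)
    + (i k).comp (j k)

/-- The differential of the moment map at `(B, i, j)`, evaluated on `(δB, δi, δj)`,
`k`-th component. -/
def dMomentMap {I H : Type} [Fintype H] [DecidableEq I] (G : GraphData I H)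
    (V W : I → Type)
    [∀ k, NormedAddCommGroup (V k)] [∀ k, NormedSpace ℂ (V k)]
    [∀ k, NormedAddCommGroup (W k)] [∀ k, NormedSpace ℂ (W k)]
    (ε : H → ℂ)
    (B : ∀ h : H, V (G.src h) →L[ℂ] V (G.tgt h))
    (i : ∀ k : I, W k →L[ℂ] V k) (j : ∀ k : I, V k →L[ℂ] W k)
    (δB : ∀ h : H, V (G.src h) →L[ℂ] V (G.tgt h))
    (δi : ∀ k : I, W k →L[ℂ] V k) (δj : ∀ k : I, V k →L[ℂ] W k) (k : I) :
    V k →L[ℂ] V k :=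
  (∑ h : H, if e : G.tgt h = k then
      ((vCast V e : V (G.tgt h) →L[ℂ] V k).comp
        ((ε h • (barComp G V h (δB h) (B (G.bar h))
            + barComp G V h (B h) (δB (G.bar h)))).comp
          ((vCast V e).symm : V k →L[ℂ] V (G.tgt h))))
    else 0)
    + (δi k).comp (j k) + (i k).comp (δj k)


set_option linter.unusedSectionVars false

open LinearMap

section AuxTrace
variable {M N : Type} [AddCommGroup M] [Module ℂ M] [AddCommGroup N] [Module ℂ N]
  [FiniteDimensional ℂ M] [FiniteDimensional ℂ N]

lemma aux_trace_smulRight (f : Module.Dual ℂ M) (y : M) :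
    LinearMap.trace ℂ M (LinearMap.smulRight f y) = f y := by
  have h1 : LinearMap.smulRight f y = dualTensorHom ℂ M M (f ⊗ₜ[ℂ] y) := by
    ext x; simp
  rw [h1, LinearMap.trace_eq_contract_apply, contractLeft_apply]

lemma aux_eq_zero (A : N →ₗ[ℂ] M)
    (hA : ∀ E : M →ₗ[ℂ] N, LinearMap.trace ℂ M (A ∘ₗ E) = 0) : A = 0 := by
  ext y
  simp only [LinearMap.zero_apply]
  rw [← Module.forall_dual_apply_eq_zero_iff ℂ]
  intro f
  have h2 : A ∘ₗ LinearMap.smulRight f y = LinearMap.smulRight f (A y) := by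
    ext x; simp
  have h3 := hA (LinearMap.smulRight f y)
  rwa [h2, aux_trace_smulRight] at h3

lemma aux_repr (φ : Module.Dual ℂ (M →ₗ[ℂ] M)) :
    ∃ C : M →ₗ[ℂ] M, ∀ E : M →ₗ[ℂ] M, φ E = LinearMap.trace ℂ M (C ∘ₗ E) := by
  let T : (M →ₗ[ℂ] M) →ₗ[ℂ] Module.Dual ℂ (M →ₗ[ℂ] M) :=
    { toFun := fun C => (LinearMap.trace ℂ M) ∘ₗ (LinearMap.llcomp ℂ M M M C)
      map_add' := by intro C C'; ext E; simp [LinearMap.add_comp]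
      map_smul' := by intro c C; ext E; simp [LinearMap.smul_comp] }
  have hinj : Function.Injective T := by
    rw [injective_iff_map_eq_zero]
    intro C hC
    refine aux_eq_zero C (fun E => ?_)
    have := DFunLike.congr_fun hC E
    simpa [T, LinearMap.llcomp_apply'] using this
  have hsurj : Function.Surjective T := by
    refine (LinearMap.injective_iff_surjective_of_finrank_eq_finrank ?_).mp hinj
    rw [Subspace.dual_finrank_eq]
  obtain ⟨C, hC⟩ := hsurj φ
  exact ⟨C, fun E => by rw [← hC]; rfl⟩

lemma aux_eq_of_trace {M' N' : Type} [NormedAddCommGroup M'] [NormedSpace ℂ M']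
    [NormedAddCommGroup N'] [NormedSpace ℂ N'] [FiniteDimensional ℂ M'] [FiniteDimensional ℂ N']
    (A₁ A₂ : N' →ₗ[ℂ] M')
    (h : ∀ D : M' →L[ℂ] N', LinearMap.trace ℂ M' (A₁ ∘ₗ (D : M' →ₗ[ℂ] N'))
      = LinearMap.trace ℂ M' (A₂ ∘ₗ (D : M' →ₗ[ℂ] N'))) : A₁ = A₂ := by
  have hz := aux_eq_zero (A₁ - A₂) (fun E => by
    have h2 := h (LinearMap.toContinuousLinearMap E)
    rw [LinearMap.coe_toContinuousLinearMap] at h2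
    simp [LinearMap.sub_comp, h2])
  exact sub_eq_zero.mp hz

end AuxTrace

section VCastTools
variable {I : Type} (V : I → Type) [∀ k, NormedAddCommGroup (V k)] [∀ k, NormedSpace ℂ (V k)]

/-- linear-map version of `vCast`. -/
def vCL {k l : I} (e : k = l) : V k →ₗ[ℂ] V l :=
  ((vCast V e : V k →L[ℂ] V l) : V k →ₗ[ℂ] V l)

@[simp] lemma vCL_rfl {k : I} (e : k = k) : vCL V e = LinearMap.id := rfl

@[simp] lemma vCL_trans {k l m : I} (e : k = l) (f : l = m) :
    vCL V f ∘ₗ vCL V e = vCL V (e.trans f) := by subst e; subst f; rfl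

lemma vCast_symm_coe {k l : I} (e : k = l) :
    (((vCast V e).symm : V l →L[ℂ] V k) : V l →ₗ[ℂ] V k) = vCL V e.symm := by
  subst e; rfl

@[simp] lemma vCL_symm_comp {k l : I} (e : k = l) :
    vCL V e.symm ∘ₗ vCL V e = LinearMap.id := by subst e; rfl

@[simp] lemma vCL_comp_symm {k l : I} (e : k = l) :
    vCL V e ∘ₗ vCL V e.symm = LinearMap.id := by subst e; rfl

lemma fam_conj (C : ∀ k : I, V k →ₗ[ℂ] V k) {k l : I} (e : k = l) :
    C l = vCL V e ∘ₗ C k ∘ₗ vCL V e.symm := by subst e; rfl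

lemma fam_congr {H' : Type} {f g : H' → I} (A : ∀ h : H', V (f h) →L[ℂ] V (g h))
    {h h' : H'} (e : h = h') :
    A h' = ((vCast V (congrArg g e) : V (g h) →L[ℂ] V (g h')).comp
      ((A h).comp ((vCast V (congrArg f e)).symm : V (f h') →L[ℂ] V (f h)))) := by
  subst e; rfl

end VCastTools

section DMM
variable {I H : Type} [Fintype H] [DecidableEq I] (G : GraphData I H)
    (V W : I → Type)
    [∀ k, NormedAddCommGroup (V k)] [∀ k, NormedSpace ℂ (V k)]
    [∀ k, NormedAddCommGroup (W k)] [∀ k, NormedSpace ℂ (W k)]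
    (ε : H → ℂ)
    (B : ∀ h : H, V (G.src h) →L[ℂ] V (G.tgt h))
    (i : ∀ k : I, W k →L[ℂ] V k) (j : ∀ k : I, V k →L[ℂ] W k)

@[simp] lemma barComp_zero_left (h : H) (A' : V (G.src (G.bar h)) →L[ℂ] V (G.tgt (G.bar h))) :
    barComp G V h 0 A' = 0 := by
  simp [barComp]

@[simp] lemma barComp_zero_right (h : H) (A : V (G.src h) →L[ℂ] V (G.tgt h)) :
    barComp G V h A 0 = 0 := by
  simp [barComp]

lemma barComp_add (h : H) (A₁ A₂ : V (G.src h) →L[ℂ] V (G.tgt h))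
    (A₁' A₂' : V (G.src (G.bar h)) →L[ℂ] V (G.tgt (G.bar h))) :
    barComp G V h (A₁ + A₂) (A₁' + A₂') =
      barComp G V h A₁ A₁' + barComp G V h A₂ A₂'
      + (barComp G V h A₁ A₂' + barComp G V h A₂ A₁') := by
  simp [barComp, ContinuousLinearMap.add_comp, ContinuousLinearMap.comp_add]
  abel

lemma barComp_smul (c : ℂ) (h : H) (A : V (G.src h) →L[ℂ] V (G.tgt h))
    (A' : V (G.src (G.bar h)) →L[ℂ] V (G.tgt (G.bar h))) :
    barComp G V h (c • A) A' = c • barComp G V h A A' := by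
  simp [barComp, ContinuousLinearMap.smul_comp]

lemma barComp_smul_right (c : ℂ) (h : H) (A : V (G.src h) →L[ℂ] V (G.tgt h))
    (A' : V (G.src (G.bar h)) →L[ℂ] V (G.tgt (G.bar h))) :
    barComp G V h A (c • A') = c • barComp G V h A A' := by
  simp [barComp, ContinuousLinearMap.smul_comp, ContinuousLinearMap.comp_smul]

lemma dMomentMap_add (δB δB' : ∀ h : H, V (G.src h) →L[ℂ] V (G.tgt h))
    (δi δi' : ∀ k : I, W k →L[ℂ] V k) (δj δj' : ∀ k : I, V k →L[ℂ] W k) (k : I) :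
    dMomentMap G V W ε B i j (δB + δB') (δi + δi') (δj + δj') k =
      dMomentMap G V W ε B i j δB δi δj k + dMomentMap G V W ε B i j δB' δi' δj' k := by
  unfold dMomentMap
  have hsum : ∀ h : H,
      (if e : G.tgt h = k then
        ((vCast V e : V (G.tgt h) →L[ℂ] V k).comp
          ((ε h • (barComp G V h ((δB + δB') h) (B (G.bar h))
              + barComp G V h (B h) ((δB + δB') (G.bar h)))).comp
            ((vCast V e).symm : V k →L[ℂ] V (G.tgt h))))
      else 0) =
      (if e : G.tgt h = k then
        ((vCast V e : V (G.tgt h) →L[ℂ] V k).comp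
          ((ε h • (barComp G V h (δB h) (B (G.bar h))
              + barComp G V h (B h) (δB (G.bar h)))).comp
            ((vCast V e).symm : V k →L[ℂ] V (G.tgt h))))
      else 0) +
      (if e : G.tgt h = k then
        ((vCast V e : V (G.tgt h) →L[ℂ] V k).comp
          ((ε h • (barComp G V h (δB' h) (B (G.bar h))
              + barComp G V h (B h) (δB' (G.bar h)))).comp
            ((vCast V e).symm : V k →L[ℂ] V (G.tgt h))))
      else 0) := by
    intro h
    by_cases e : G.tgt h = k
    · simp only [dif_pos e, Pi.add_apply]
      rw [← ContinuousLinearMap.comp_add, ← ContinuousLinearMap.add_comp, ← smul_add]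
      congr 2
      have h1 : barComp G V h (δB h + δB' h) (B (G.bar h)) =
          barComp G V h (δB h) (B (G.bar h)) + barComp G V h (δB' h) (B (G.bar h)) := by
        simp [barComp, ContinuousLinearMap.add_comp]
      have h2 : barComp G V h (B h) (δB (G.bar h) + δB' (G.bar h)) =
          barComp G V h (B h) (δB (G.bar h)) + barComp G V h (B h) (δB' (G.bar h)) := by
        simp [barComp, ContinuousLinearMap.comp_add, ContinuousLinearMap.add_comp]
      rw [h1, h2]; abel
    · simp [e]
  rw [Finset.sum_congr rfl (fun h _ => hsum h), Finset.sum_add_distrib]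
  simp only [Pi.add_apply, ContinuousLinearMap.add_comp, ContinuousLinearMap.comp_add]
  abel

lemma dMomentMap_smul (c : ℂ) (δB : ∀ h : H, V (G.src h) →L[ℂ] V (G.tgt h))
    (δi : ∀ k : I, W k →L[ℂ] V k) (δj : ∀ k : I, V k →L[ℂ] W k) (k : I) :
    dMomentMap G V W ε B i j (c • δB) (c • δi) (c • δj) k =
      c • dMomentMap G V W ε B i j δB δi δj k := by
  unfold dMomentMap
  rw [smul_add, smul_add, Finset.smul_sum]
  have hsum : ∀ h : H,
      (if e : G.tgt h = k then
        ((vCast V e : V (G.tgt h) →L[ℂ] V k).comp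
          ((ε h • (barComp G V h ((c • δB) h) (B (G.bar h))
              + barComp G V h (B h) ((c • δB) (G.bar h)))).comp
            ((vCast V e).symm : V k →L[ℂ] V (G.tgt h))))
      else 0) =
      c • (if e : G.tgt h = k then
        ((vCast V e : V (G.tgt h) →L[ℂ] V k).comp
          ((ε h • (barComp G V h (δB h) (B (G.bar h))
              + barComp G V h (B h) (δB (G.bar h)))).comp
            ((vCast V e).symm : V k →L[ℂ] V (G.tgt h))))
      else 0) := by
    intro h
    by_cases e : G.tgt h = k
    · simp only [dif_pos e, Pi.smul_apply]
      rw [barComp_smul]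
      have h2 : barComp G V h (B h) (c • δB (G.bar h)) =
          c • barComp G V h (B h) (δB (G.bar h)) := barComp_smul_right G V c h _ _
      rw [h2, ← smul_add, smul_comm (ε h) c, ContinuousLinearMap.smul_comp,
        ContinuousLinearMap.comp_smul]
    · simp [e]
  rw [Finset.sum_congr rfl (fun h _ => hsum h)]
  simp only [Pi.smul_apply, ContinuousLinearMap.smul_comp, ContinuousLinearMap.comp_smul]

end DMM

set_option linter.unusedSectionVars false

section DMM2
variable {I H : Type} [Fintype H] [DecidableEq I] [DecidableEq H] (G : GraphData I H)
    (V W : I → Type)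
    [∀ k, NormedAddCommGroup (V k)] [∀ k, NormedSpace ℂ (V k)]
    [∀ k, NormedAddCommGroup (W k)] [∀ k, NormedSpace ℂ (W k)]
    (ε : H → ℂ)
    (B : ∀ h : H, V (G.src h) →L[ℂ] V (G.tgt h))
    (i : ∀ k : I, W k →L[ℂ] V k) (j : ∀ k : I, V k →L[ℂ] W k)

lemma dite_cast_single {l : I} (Y : V l →L[ℂ] V l) (k : I) :
    (if e : l = k then
      ((vCast V e : V l →L[ℂ] V k).comp
        (Y.comp ((vCast V e).symm : V k →L[ℂ] V l)))
    else 0) = Pi.single (M := fun k => V k →L[ℂ] V k) l Y k := by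
  by_cases e : l = k
  · subst e
    simp only [dif_pos, Pi.single_eq_same]
    rfl
  · rw [dif_neg e, Pi.single_eq_of_ne (Ne.symm e)]

lemma dMomentMap_deltaI (k : I) (E : W k →L[ℂ] V k) (k' : I) :
    dMomentMap G V W ε B i j 0 (Pi.single k E) 0 k' =
      Pi.single (M := fun k => V k →L[ℂ] V k) k (E.comp (j k)) k' := by
  unfold dMomentMap
  have hz : ∀ h : H,
      (if e : G.tgt h = k' then
        ((vCast V e : V (G.tgt h) →L[ℂ] V k').comp
          ((ε h • (barComp G V h ((0 : ∀ h : H, V (G.src h) →L[ℂ] V (G.tgt h)) h) (B (G.bar h))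
              + barComp G V h (B h) ((0 : ∀ h : H, V (G.src h) →L[ℂ] V (G.tgt h)) (G.bar h)))).comp
            ((vCast V e).symm : V k' →L[ℂ] V (G.tgt h))))
      else 0) = 0 := by
    intro h
    by_cases e : G.tgt h = k'
    · simp [dif_pos e]
    · simp [e]
  rw [Finset.sum_congr rfl (fun h _ => hz h)]
  simp only [Finset.sum_const_zero, zero_add, Pi.zero_apply, ContinuousLinearMap.comp_zero,
    add_zero]
  rcases eq_or_ne k' k with rfl | hne
  · simp
  · rw [Pi.single_eq_of_ne hne, Pi.single_eq_of_ne hne, ContinuousLinearMap.zero_comp]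

lemma dMomentMap_deltaB (h₀ : H) (D : V (G.src h₀) →L[ℂ] V (G.tgt h₀)) (k : I) :
    dMomentMap G V W ε B i j (Pi.single (M := fun h => V (G.src h) →L[ℂ] V (G.tgt h)) h₀ D) 0 0 k =
      Pi.single (M := fun k => V k →L[ℂ] V k) (G.tgt h₀)
        (ε h₀ • barComp G V h₀ D (B (G.bar h₀))) k
      + Pi.single (M := fun k => V k →L[ℂ] V k) (G.tgt (G.bar h₀))
        (ε (G.bar h₀) • barComp G V (G.bar h₀) (B (G.bar h₀))
          (Pi.single (M := fun h => V (G.src h) →L[ℂ] V (G.tgt h)) h₀ D (G.bar (G.bar h₀)))) k := by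
  unfold dMomentMap
  simp only [Pi.zero_apply, ContinuousLinearMap.comp_zero, ContinuousLinearMap.zero_comp,
    add_zero]
  have hFh0 :
      (if e : G.tgt h₀ = k then
        ((vCast V e : V (G.tgt h₀) →L[ℂ] V k).comp
          ((ε h₀ • (barComp G V h₀ (Pi.single (M := fun h => V (G.src h) →L[ℂ] V (G.tgt h)) h₀ D h₀) (B (G.bar h₀))
              + barComp G V h₀ (B h₀) (Pi.single (M := fun h => V (G.src h) →L[ℂ] V (G.tgt h)) h₀ D (G.bar h₀)))).comp
            ((vCast V e).symm : V k →L[ℂ] V (G.tgt h₀))))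
      else 0) =
      Pi.single (M := fun k => V k →L[ℂ] V k) (G.tgt h₀)
        (ε h₀ • barComp G V h₀ D (B (G.bar h₀))) k := by
    rw [← dite_cast_single (V := V)]
    have : (ε h₀ • (barComp G V h₀ (Pi.single (M := fun h => V (G.src h) →L[ℂ] V (G.tgt h)) h₀ D h₀) (B (G.bar h₀))
        + barComp G V h₀ (B h₀) (Pi.single (M := fun h => V (G.src h) →L[ℂ] V (G.tgt h)) h₀ D (G.bar h₀)))) =
        ε h₀ • barComp G V h₀ D (B (G.bar h₀)) := by
      rw [Pi.single_eq_same, Pi.single_eq_of_ne (G.bar_ne_self h₀), barComp_zero_right,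
        add_zero]
    rw [this]
  have hFb :
      (if e : G.tgt (G.bar h₀) = k then
        ((vCast V e : V (G.tgt (G.bar h₀)) →L[ℂ] V k).comp
          ((ε (G.bar h₀) • (barComp G V (G.bar h₀) (Pi.single (M := fun h => V (G.src h) →L[ℂ] V (G.tgt h)) h₀ D (G.bar h₀)) (B (G.bar (G.bar h₀)))
              + barComp G V (G.bar h₀) (B (G.bar h₀)) (Pi.single (M := fun h => V (G.src h) →L[ℂ] V (G.tgt h)) h₀ D (G.bar (G.bar h₀))))).comp
            ((vCast V e).symm : V k →L[ℂ] V (G.tgt (G.bar h₀)))))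
      else 0) =
      Pi.single (M := fun k => V k →L[ℂ] V k) (G.tgt (G.bar h₀))
        (ε (G.bar h₀) • barComp G V (G.bar h₀) (B (G.bar h₀))
          (Pi.single (M := fun h => V (G.src h) →L[ℂ] V (G.tgt h)) h₀ D (G.bar (G.bar h₀)))) k := by
    rw [← dite_cast_single (V := V)]
    have : (ε (G.bar h₀) • (barComp G V (G.bar h₀) (Pi.single (M := fun h => V (G.src h) →L[ℂ] V (G.tgt h)) h₀ D (G.bar h₀)) (B (G.bar (G.bar h₀)))
        + barComp G V (G.bar h₀) (B (G.bar h₀)) (Pi.single (M := fun h => V (G.src h) →L[ℂ] V (G.tgt h)) h₀ D (G.bar (G.bar h₀))))) =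
        ε (G.bar h₀) • barComp G V (G.bar h₀) (B (G.bar h₀))
          (Pi.single (M := fun h => V (G.src h) →L[ℂ] V (G.tgt h)) h₀ D (G.bar (G.bar h₀))) := by
      rw [Pi.single_eq_of_ne (G.bar_ne_self h₀), barComp_zero_left, zero_add]
    rw [this]
  have hsplit : ∀ h : H,
      (if e : G.tgt h = k then
        ((vCast V e : V (G.tgt h) →L[ℂ] V k).comp
          ((ε h • (barComp G V h (Pi.single (M := fun h => V (G.src h) →L[ℂ] V (G.tgt h)) h₀ D h) (B (G.bar h))
              + barComp G V h (B h) (Pi.single (M := fun h => V (G.src h) →L[ℂ] V (G.tgt h)) h₀ D (G.bar h)))).comp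
            ((vCast V e).symm : V k →L[ℂ] V (G.tgt h))))
      else 0) =
      (if h = h₀ then Pi.single (M := fun k => V k →L[ℂ] V k) (G.tgt h₀)
        (ε h₀ • barComp G V h₀ D (B (G.bar h₀))) k else 0)
      + (if h = G.bar h₀ then Pi.single (M := fun k => V k →L[ℂ] V k) (G.tgt (G.bar h₀))
        (ε (G.bar h₀) • barComp G V (G.bar h₀) (B (G.bar h₀))
          (Pi.single (M := fun h => V (G.src h) →L[ℂ] V (G.tgt h)) h₀ D (G.bar (G.bar h₀)))) k else 0) := by
    intro h
    rcases eq_or_ne h h₀ with rfl | h1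
    · rw [if_pos rfl, if_neg (fun hc : h = G.bar h => (G.bar_ne_self h) (hc).symm), add_zero,
        hFh0]
    · rcases eq_or_ne h (G.bar h₀) with rfl | h2
      · rw [if_neg h1, if_pos rfl, zero_add, hFb]
      · rw [if_neg h1, if_neg h2, add_zero]
        have e1 : Pi.single (M := fun h => V (G.src h) →L[ℂ] V (G.tgt h)) h₀ D h = 0 := Pi.single_eq_of_ne h1 _
        have e2 : Pi.single (M := fun h => V (G.src h) →L[ℂ] V (G.tgt h)) h₀ D (G.bar h) = 0 := by
          refine Pi.single_eq_of_ne (fun hc => h2 ?_) _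
          rw [← hc, G.bar_invol]
        by_cases e : G.tgt h = k
        · rw [dif_pos e, e1, e2, barComp_zero_left, barComp_zero_right, add_zero, smul_zero,
            ContinuousLinearMap.zero_comp, ContinuousLinearMap.comp_zero]
        · rw [dif_neg e]
  rw [Finset.sum_congr rfl (fun h _ => hsplit h), Finset.sum_add_distrib,
    Finset.sum_ite_eq' Finset.univ h₀, Finset.sum_ite_eq' Finset.univ (G.bar h₀),
    if_pos (Finset.mem_univ _), if_pos (Finset.mem_univ _)]

end DMM2

section VCastMore
variable {I : Type} (V : I → Type) [∀ k, NormedAddCommGroup (V k)] [∀ k, NormedSpace ℂ (V k)]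

@[simp] lemma vCL_trans' {k l m n : I} (e : k = l) (f : l = m) (Z : V m →ₗ[ℂ] V n) :
    (Z ∘ₗ vCL V f) ∘ₗ vCL V e = Z ∘ₗ vCL V (e.trans f) := by
  subst e; subst f; rfl

@[simp] lemma vCL_cancel_symm' {k l : I} (e : k = l) {n : I} (Z : V k →ₗ[ℂ] V n) :
    (Z ∘ₗ vCL V e.symm) ∘ₗ vCL V e = Z := by subst e; rfl

@[simp] lemma vCL_cancel_symm'' {k l : I} (e : k = l) {n : I} (Z : V l →ₗ[ℂ] V n) :
    (Z ∘ₗ vCL V e) ∘ₗ vCL V e.symm = Z := by subst e; rfl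

@[simp] lemma vCL_symm_symm {k l : I} (e : k = l) : vCL V e.symm.symm = vCL V e := rfl

lemma vCL_cancel {k l m n : I} (e : k = l) (f : m = n) (X Y : V l →ₗ[ℂ] V m)
    (hXY : (vCL V f ∘ₗ X) ∘ₗ vCL V e = (vCL V f ∘ₗ Y) ∘ₗ vCL V e) : X = Y := by
  subst e; subst f; simpa using hXY

end VCastMore


section MoreAux
variable {I H : Type} (G : GraphData I H) (V : I → Type)
    [∀ k, NormedAddCommGroup (V k)] [∀ k, NormedSpace ℂ (V k)]

lemma barComp_coe (h : H) (A : V (G.src h) →L[ℂ] V (G.tgt h))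
    (A' : V (G.src (G.bar h)) →L[ℂ] V (G.tgt (G.bar h))) :
    (barComp G V h A A' : V (G.tgt h) →ₗ[ℂ] V (G.tgt h)) =
      (A : V (G.src h) →ₗ[ℂ] V (G.tgt h)) ∘ₗ (vCL V (G.tgt_bar h) ∘ₗ
        ((A' : V (G.src (G.bar h)) →ₗ[ℂ] V (G.tgt (G.bar h))) ∘ₗ vCL V (G.src_bar h).symm)) := by
  simp only [barComp, ContinuousLinearMap.toLinearMap_comp, vCast_symm_coe]
  rfl

lemma aux_cyc {M N P : Type} [AddCommGroup M] [Module ℂ M] [AddCommGroup N] [Module ℂ N]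
    [AddCommGroup P] [Module ℂ P]
    [Module.Finite ℂ M] [Module.Free ℂ M] [Module.Finite ℂ N] [Module.Free ℂ N]
    (f : M →ₗ[ℂ] N) (g : N →ₗ[ℂ] P) (h : P →ₗ[ℂ] M) :
    LinearMap.trace ℂ M ((h ∘ₗ g) ∘ₗ f) = LinearMap.trace ℂ N ((f ∘ₗ h) ∘ₗ g) := by
  calc LinearMap.trace ℂ M ((h ∘ₗ g) ∘ₗ f) = LinearMap.trace ℂ N (f ∘ₗ (h ∘ₗ g)) :=
        LinearMap.trace_comp_comm' _ _
    _ = LinearMap.trace ℂ N ((f ∘ₗ h) ∘ₗ g) := by rw [LinearMap.comp_assoc]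

end MoreAux


section Rot
variable {M N N₂ N₃ N₄ N₅ : Type}
  [AddCommGroup M] [Module ℂ M] [AddCommGroup N] [Module ℂ N]
  [AddCommGroup N₂] [Module ℂ N₂] [AddCommGroup N₃] [Module ℂ N₃]
  [AddCommGroup N₄] [Module ℂ N₄] [AddCommGroup N₅] [Module ℂ N₅]
  [Module.Finite ℂ M] [Module.Free ℂ M] [Module.Finite ℂ N] [Module.Free ℂ N]
  [Module.Finite ℂ N₂] [Module.Free ℂ N₂] [Module.Finite ℂ N₃] [Module.Free ℂ N₃]
  [Module.Finite ℂ N₄] [Module.Free ℂ N₄] [Module.Finite ℂ N₅] [Module.Free ℂ N₅]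

lemma rot1 (C : N →ₗ[ℂ] N) (D : M →ₗ[ℂ] N) (X : N →ₗ[ℂ] M) :
    LinearMap.trace ℂ N (C ∘ₗ (D ∘ₗ X)) = LinearMap.trace ℂ M ((X ∘ₗ C) ∘ₗ D) := by
  calc LinearMap.trace ℂ N (C ∘ₗ (D ∘ₗ X)) = LinearMap.trace ℂ N ((C ∘ₗ D) ∘ₗ X) := by
        rw [LinearMap.comp_assoc]
    _ = LinearMap.trace ℂ M (X ∘ₗ (C ∘ₗ D)) := LinearMap.trace_comp_comm' _ _
    _ = LinearMap.trace ℂ M ((X ∘ₗ C) ∘ₗ D) := by rw [LinearMap.comp_assoc]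

lemma rot2 (C : N₄ →ₗ[ℂ] N₄) (b : N₃ →ₗ[ℂ] N₄) (x : N₂ →ₗ[ℂ] N₃) (y : N →ₗ[ℂ] N₂)
    (D : M →ₗ[ℂ] N) (z : N₅ →ₗ[ℂ] M) (w : N₄ →ₗ[ℂ] N₅) :
    LinearMap.trace ℂ N₄ (C ∘ₗ (b ∘ₗ (x ∘ₗ ((y ∘ₗ (D ∘ₗ z)) ∘ₗ w)))) =
      LinearMap.trace ℂ M (((((z ∘ₗ w) ∘ₗ C) ∘ₗ b) ∘ₗ (x ∘ₗ y)) ∘ₗ D) := by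
  have e1 : C ∘ₗ (b ∘ₗ (x ∘ₗ ((y ∘ₗ (D ∘ₗ z)) ∘ₗ w))) =
      (C ∘ₗ (b ∘ₗ (x ∘ₗ (y ∘ₗ (D ∘ₗ z))))) ∘ₗ w := by
    simp only [LinearMap.comp_assoc]
  rw [e1, LinearMap.trace_comp_comm' w _]
  have e2 : w ∘ₗ (C ∘ₗ (b ∘ₗ (x ∘ₗ (y ∘ₗ (D ∘ₗ z))))) =
      (w ∘ₗ (C ∘ₗ (b ∘ₗ (x ∘ₗ y)))) ∘ₗ (D ∘ₗ z) := by
    simp only [LinearMap.comp_assoc]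
  rw [e2, LinearMap.trace_comp_comm' (D ∘ₗ z) _]
  have e3 : (D ∘ₗ z) ∘ₗ (w ∘ₗ (C ∘ₗ (b ∘ₗ (x ∘ₗ y)))) =
      D ∘ₗ (z ∘ₗ (w ∘ₗ (C ∘ₗ (b ∘ₗ (x ∘ₗ y))))) := by
    simp only [LinearMap.comp_assoc]
  rw [e3, LinearMap.trace_comp_comm' _ D]
  have e4 : (z ∘ₗ (w ∘ₗ (C ∘ₗ (b ∘ₗ (x ∘ₗ y))))) ∘ₗ D =
      ((((z ∘ₗ w) ∘ₗ C) ∘ₗ b) ∘ₗ (x ∘ₗ y)) ∘ₗ D := by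
    simp only [LinearMap.comp_assoc]
  rw [e4]

end Rot

/-- If `(B, i, j)` is a stable ADHM datum with `μ(B,i,j) = 0`, then the
differential `dμ : M → ⊕ₖ End(V_k)` of the moment map at `(B,i,j)` is surjective. -/
theorem statement1
    {I H : Type} [Fintype I] [Fintype H] [DecidableEq I]
    (G : GraphData I H) (V W : I → Type)
    [∀ k, NormedAddCommGroup (V k)] [∀ k, NormedSpace ℂ (V k)]
    [∀ k, FiniteDimensional ℂ (V k)]
    [∀ k, NormedAddCommGroup (W k)] [∀ k, NormedSpace ℂ (W k)]
    [∀ k, FiniteDimensional ℂ (W k)]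
    (ε : H → ℂ) (hε0 : ∀ h, ε h ≠ 0) (hεbar : ∀ h, ε (G.bar h) = - ε h)
    (B : ∀ h : H, V (G.src h) →L[ℂ] V (G.tgt h))
    (i : ∀ k : I, W k →L[ℂ] V k) (j : ∀ k : I, V k →L[ℂ] W k)
    (hst : IsStable G V W B j)
    (hμ : ∀ k : I, momentMap G V W ε B i j k = 0) :
    Function.Surjective
      (fun m : (∀ h : H, V (G.src h) →L[ℂ] V (G.tgt h)) ×
          (∀ k : I, W k →L[ℂ] V k) × (∀ k : I, V k →L[ℂ] W k) =>
        fun k : I => dMomentMap G V W ε B i j m.1 m.2.1 m.2.2 k) := by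
  classical
  let F : ((∀ h : H, V (G.src h) →L[ℂ] V (G.tgt h)) ×
      (∀ k : I, W k →L[ℂ] V k) × (∀ k : I, V k →L[ℂ] W k)) →ₗ[ℂ] (∀ k : I, V k →L[ℂ] V k) :=
    { toFun := fun m => fun k => dMomentMap G V W ε B i j m.1 m.2.1 m.2.2 k
      map_add' := fun m m' => funext fun k => dMomentMap_add G V W ε B i j _ _ _ _ _ _ k
      map_smul' := fun c m => funext fun k => dMomentMap_smul G V W ε B i j c _ _ _ k }
  show Function.Surjective ⇑F
  rw [← LinearMap.range_eq_top]
  by_contra hns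
  obtain ⟨φ, hφne, hφmap⟩ :=
    Submodule.exists_dual_map_eq_bot_of_lt_top (lt_top_iff_ne_top.mpr hns) inferInstance
  have hφ0 : ∀ m, φ (F m) = 0 := by
    intro m
    have hmem : φ (F m) ∈ (LinearMap.range F).map φ :=
      Submodule.mem_map_of_mem (LinearMap.mem_range_self F m)
    rw [hφmap] at hmem
    simpa using hmem
  -- trace representation of φ on each factor
  have hrep : ∀ k : I, ∃ C : V k →ₗ[ℂ] V k, ∀ E : V k →L[ℂ] V k,
      φ (Pi.single k E) = LinearMap.trace ℂ (V k) (C ∘ₗ (E : V k →ₗ[ℂ] V k)) := by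
    intro k
    let ι : (V k →ₗ[ℂ] V k) →ₗ[ℂ] (∀ k : I, V k →L[ℂ] V k) :=
      (LinearMap.single ℂ (fun k => V k →L[ℂ] V k) k) ∘ₗ
        (LinearMap.toContinuousLinearMap :
          (V k →ₗ[ℂ] V k) ≃ₗ[ℂ] (V k →L[ℂ] V k)).toLinearMap
    obtain ⟨C, hCr⟩ := aux_repr (φ ∘ₗ ι)
    refine ⟨C, fun E => ?_⟩
    have e1 : LinearMap.toContinuousLinearMap (E : V k →ₗ[ℂ] V k) = E :=
      ContinuousLinearMap.ext fun x => by simp [LinearMap.coe_toContinuousLinearMap']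
    have h1 : ι (E : V k →ₗ[ℂ] V k) = Pi.single k E := by
      simp only [ι, LinearMap.comp_apply, LinearEquiv.coe_coe, e1, LinearMap.coe_single]
    have h2 := hCr (E : V k →ₗ[ℂ] V k)
    rw [LinearMap.comp_apply, h1] at h2
    exact h2
  choose C hC using hrep
  -- relation: j ∘ C = 0
  have hjC : ∀ (k : I), ((j k : V k →ₗ[ℂ] W k) ∘ₗ C k) = 0 := by
    intro k
    refine aux_eq_zero _ (fun E' => ?_)
    have h1 := hφ0 (0, Pi.single k (LinearMap.toContinuousLinearMap E'), 0)
    have h2 : F (0, Pi.single k (LinearMap.toContinuousLinearMap E'), 0) =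
        Pi.single k ((LinearMap.toContinuousLinearMap E').comp (j k)) := by
      funext k'
      exact dMomentMap_deltaI G V W ε B i j k _ k'
    rw [h2, hC k _] at h1
    rw [ContinuousLinearMap.toLinearMap_comp, LinearMap.coe_toContinuousLinearMap] at h1
    calc LinearMap.trace ℂ (W k) (((j k : V k →ₗ[ℂ] W k) ∘ₗ C k) ∘ₗ E')
        = LinearMap.trace ℂ (W k) ((j k : V k →ₗ[ℂ] W k) ∘ₗ (C k ∘ₗ E')) := by
          rw [LinearMap.comp_assoc]
      _ = LinearMap.trace ℂ (V k) ((C k ∘ₗ E') ∘ₗ (j k : V k →ₗ[ℂ] W k)) :=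
          LinearMap.trace_comp_comm' _ _
      _ = LinearMap.trace ℂ (V k) (C k ∘ₗ (E' ∘ₗ (j k : V k →ₗ[ℂ] W k))) := by
          rw [LinearMap.comp_assoc]
      _ = 0 := h1
  have hjCx : ∀ (k : I) (x : V k), j k (C k x) = 0 := by
    intro k x
    have := DFunLike.congr_fun (hjC k) x
    simpa using this
  -- relation: commutation with B, with casts
  have hR3 : ∀ h₀ : H,
      (vCL V (G.tgt_bar h₀) ∘ₗ ((B (G.bar h₀) :
          V (G.src (G.bar h₀)) →ₗ[ℂ] V (G.tgt (G.bar h₀))) ∘ₗ vCL V (G.src_bar h₀).symm))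
        ∘ₗ C (G.tgt h₀)
      = (((vCL V (congrArg G.src (G.bar_invol h₀).symm).symm
            ∘ₗ vCL V (G.src_bar (G.bar h₀)).symm) ∘ₗ C (G.tgt (G.bar h₀)))
          ∘ₗ (B (G.bar h₀) : V (G.src (G.bar h₀)) →ₗ[ℂ] V (G.tgt (G.bar h₀))))
        ∘ₗ (vCL V (G.tgt_bar (G.bar h₀)) ∘ₗ vCL V (congrArg G.tgt (G.bar_invol h₀).symm)) := by
    intro h₀
    refine aux_eq_of_trace _ _ (fun D => ?_)
    have h1 := hφ0 (Pi.single h₀ D, 0, 0)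
    have h2 : F (Pi.single h₀ D, 0, 0) =
        Pi.single (G.tgt h₀) (ε h₀ • barComp G V h₀ D (B (G.bar h₀)))
        + Pi.single (G.tgt (G.bar h₀)) (ε (G.bar h₀) • barComp G V (G.bar h₀) (B (G.bar h₀))
            (Pi.single (M := fun h => V (G.src h) →L[ℂ] V (G.tgt h)) h₀ D (G.bar (G.bar h₀)))) :=
      funext fun k => dMomentMap_deltaB G V W ε B i j h₀ D k
    rw [h2, map_add, hC _ _, hC _ _] at h1
    have hP : ((Pi.single (M := fun h => V (G.src h) →L[ℂ] V (G.tgt h)) h₀ D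
          (G.bar (G.bar h₀))) :
        V (G.src (G.bar (G.bar h₀))) →ₗ[ℂ] V (G.tgt (G.bar (G.bar h₀)))) =
        vCL V (congrArg G.tgt (G.bar_invol h₀).symm) ∘ₗ
          ((D : V (G.src h₀) →ₗ[ℂ] V (G.tgt h₀))
            ∘ₗ vCL V (congrArg G.src (G.bar_invol h₀).symm).symm) := by
      rw [fam_congr V (Pi.single h₀ D) (G.bar_invol h₀).symm, Pi.single_eq_same]
      simp only [ContinuousLinearMap.toLinearMap_comp, vCast_symm_coe]
      rfl
    rw [hεbar h₀] at h1
    simp only [ContinuousLinearMap.coe_smul, LinearMap.comp_smul, map_smul, smul_eq_mul,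
      barComp_coe, hP] at h1
    rw [rot1, rot2] at h1
    refine mul_left_cancel₀ (hε0 h₀) ?_
    linear_combination h1
  -- cast-free commutation
  have hBC : ∀ h : H,
      ((B h : V (G.src h) →ₗ[ℂ] V (G.tgt h)) ∘ₗ C (G.src h)) =
        C (G.tgt h) ∘ₗ (B h : V (G.src h) →ₗ[ℂ] V (G.tgt h)) := by
    intro h
    have hmain := hR3 (G.bar h)
    have c₁ : G.src h = G.src (G.bar (G.bar h)) := congrArg G.src (G.bar_invol h).symm
    have c₂ : G.tgt h = G.tgt (G.bar (G.bar h)) := congrArg G.tgt (G.bar_invol h).symm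
    have hB : (B (G.bar (G.bar h)) :
        V (G.src (G.bar (G.bar h))) →ₗ[ℂ] V (G.tgt (G.bar (G.bar h)))) =
        (vCL V c₂ ∘ₗ (B h : V (G.src h) →ₗ[ℂ] V (G.tgt h))) ∘ₗ vCL V c₁.symm := by
      rw [fam_congr V B (G.bar_invol h).symm]
      simp only [ContinuousLinearMap.toLinearMap_comp, vCast_symm_coe]
      rfl
    rw [hB, fam_conj V C ((G.tgt_bar h).symm), fam_conj V C c₂] at hmain
    refine vCL_cancel V (G.tgt_bar h) ((G.src_bar h).symm)
      ((B h : V (G.src h) →ₗ[ℂ] V (G.tgt h)) ∘ₗ C (G.src h))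
      (C (G.tgt h) ∘ₗ (B h : V (G.src h) →ₗ[ℂ] V (G.tgt h))) ?_
    simp only [← LinearMap.comp_assoc] at hmain ⊢
    simp only [vCL_trans', vCL_trans, vCL_symm_symm, vCL_rfl, LinearMap.id_comp,
      LinearMap.comp_id] at hmain ⊢
    exact hmain
  -- stability: C = 0
  have hCzero : ∀ k : I, C k = 0 := by
    have hS := hst (fun k => LinearMap.range (C k))
      (by
        intro h x hx
        obtain ⟨y, rfl⟩ := hx
        refine ⟨B h y, ?_⟩
        have h5 := LinearMap.congr_fun (hBC h) y
        simpa using h5.symm)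
      (by
        intro k x hx
        obtain ⟨y, rfl⟩ := hx
        exact hjCx k y)
    intro k
    have := hS k
    rwa [LinearMap.range_eq_bot] at this
  -- contradiction: φ = 0
  refine hφne ?_
  refine DFunLike.ext _ _ (fun D => ?_)
  have hD : D = ∑ k : I, Pi.single k (D k) := (Finset.univ_sum_single D).symm
  rw [hD, map_sum]
  refine Finset.sum_eq_zero (fun k _ => ?_)
  rw [hC k (D k), hCzero k]
  simp
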